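/- The first derivatives of the third and fourth pieces of the cubic trigonometric B-spline agree at the knot 3h, where their common value is −3/(4·sin(3h/2)): (deriv P3)(3h) = (deriv P4)(3h) = −3/(4·sin(3h/2)). -/

import Mathlib

/-!
At the knot `3h` the factor `sin ((3h - x)/2)` of `P3` vanishes, so the derivative of `P3` there
collapses to `-(3/2) sin²(h/2) cos(h/2) / ω`, which is also the derivative of `P4`. Writing
`sin h = 2 sin(h/2) cos(h/2)` turns `ω` into `2 sin²(h/2) cos(h/2) sin(3h/2)`, and the quotient
simplifies to `-3 / (4 sin(3h/2))`.
-/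

open Real

lemma sin_eq_two_mul_sin_half_mul_cos_half (x : ℝ) : sin x = 2 * sin (x / 2) * cos (x / 2) := by
  rw [← sin_two_mul, mul_div_cancel₀ x two_ne_zero]

lemma hasDerivAt_sin_sub_div_two (a x : ℝ) :
    HasDerivAt (fun x => sin ((a - x) / 2)) (-(cos ((a - x) / 2) / 2)) x :=
  ((((hasDerivAt_id' x).const_sub a).div_const 2).sin).congr_deriv (by ring)

lemma hasDerivAt_sin_div_two_sub (a x : ℝ) :
    HasDerivAt (fun x => sin ((x - a) / 2)) (cos ((x - a) / 2) / 2) x :=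
  ((((hasDerivAt_id' x).sub_const a).div_const 2).sin).congr_deriv (by ring)

lemma HasDerivAt.mul_sq_of_eq_zero {𝕜 : Type*} [NontriviallyNormedField 𝕜] {f g : 𝕜 → 𝕜}
    {f' g' x : 𝕜} (hf : HasDerivAt f f' x) (hg : HasDerivAt g g' x) (hgx : g x = 0) : HasDerivAt (fun y => f y * g y ^ 2) 0 x :=
  (hf.mul (hg.pow 2)).congr_deriv (by simp [hgx])

lemma hasDerivAt_trigBSpline_piece_three (h ω : ℝ) :
    HasDerivAt (fun x => (sin ((4 * h - x) / 2) * (sin ((x - h) / 2) * sin ((3 * h - x) / 2)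
        + sin ((4 * h - x) / 2) * sin ((x - 2 * h) / 2)) + sin (x / 2) * sin ((3 * h - x) / 2) ^ 2) / ω)
      (-(3 / 2 * sin (h / 2) ^ 2 * cos (h / 2)) / ω) (3 * h) := by
  have hA := hasDerivAt_sin_sub_div_two (4 * h) (3 * h)
  have hB := hasDerivAt_sin_div_two_sub h (3 * h)
  have hC := hasDerivAt_sin_sub_div_two (3 * h) (3 * h)
  have hD := hasDerivAt_sin_div_two_sub (2 * h) (3 * h)
  have hE : HasDerivAt (fun x => sin (x / 2)) (cos (3 * h / 2) / 2) (3 * h) :=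
    (((hasDerivAt_id' (3 * h)).div_const 2).sin).congr_deriv (by ring)
  have hCzero : sin ((3 * h - 3 * h) / 2) = 0 := by simp
  refine (((hA.mul ((hB.mul hC).add (hA.mul hD))).add
    (hE.mul_sq_of_eq_zero hC hCzero)).div_const ω).congr_deriv ?_
  simp only [Pi.mul_apply, Pi.add_apply]
  rw [show (4 * h - 3 * h) / 2 = h / 2 by ring, show (3 * h - h) / 2 = h by ring,
    show (3 * h - 2 * h) / 2 = h / 2 by ring, sub_self, zero_div, sin_zero, cos_zero,
    sin_eq_two_mul_sin_half_mul_cos_half h]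
  ring

lemma hasDerivAt_trigBSpline_piece_four (h ω : ℝ) :
    HasDerivAt (fun x => sin ((4 * h - x) / 2) ^ 3 / ω)
      (-(3 / 2 * sin (h / 2) ^ 2 * cos (h / 2)) / ω) (3 * h) := by
  refine (((hasDerivAt_sin_sub_div_two (4 * h) (3 * h)).pow 3).div_const ω).congr_deriv ?_
  rw [show (4 * h - 3 * h) / 2 = h / 2 by ring]
  ring

lemma neg_three_half_mul_sin_sq_mul_cos_div (h : ℝ) (hs : sin (h / 2) ≠ 0)
    (hc : cos (h / 2) ≠ 0) :
    -(3 / 2 * sin (h / 2) ^ 2 * cos (h / 2)) / (sin (h / 2) * sin h * sin (3 * h / 2))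
      = -(3 / (4 * sin (3 * h / 2))) := by
  rw [sin_eq_two_mul_sin_half_mul_cos_half h]
  rcases eq_or_ne (sin (3 * h / 2)) 0 with h3 | h3
  · simp [h3]
  · field_simp
    ring

theorem stmt_5 (h : ℝ) (h0 : 0 < h) (h1 : h < 2 * Real.pi / 3)
    (ω : ℝ) (hω : ω = Real.sin (h / 2) * Real.sin h * Real.sin (3 * h / 2))
    (P3 : ℝ → ℝ) (hP3 : P3 = fun x => (Real.sin ((4 * h - x) / 2) * (Real.sin ((x - h) / 2) * Real.sin ((3 * h - x) / 2) + Real.sin ((4 * h - x) / 2) * Real.sin ((x - 2 * h) / 2)) + Real.sin (x / 2) * Real.sin ((3 * h - x) / 2) ^ 2) / ω)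
    (P4 : ℝ → ℝ) (hP4 : P4 = fun x => Real.sin ((4 * h - x) / 2) ^ 3 / ω)
    : deriv P3 (3 * h) = -(3 / (4 * Real.sin (3 * h / 2))) ∧ deriv P4 (3 * h) = -(3 / (4 * Real.sin (3 * h / 2))) := by
  have hs : sin (h / 2) ≠ 0 :=
    (sin_pos_of_pos_of_lt_pi (by linarith) (by linarith [pi_pos])).ne'
  have hc : cos (h / 2) ≠ 0 :=
    (cos_pos_of_mem_Ioo ⟨by linarith [pi_pos], by linarith [pi_pos]⟩).ne'
  have hslope := neg_three_half_mul_sin_sq_mul_cos_div h hs hc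
  subst hω hP3 hP4
  exact ⟨(hasDerivAt_trigBSpline_piece_three h _).deriv.trans hslope,
    (hasDerivAt_trigBSpline_piece_four h _).deriv.trans hslope⟩
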